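/- arXiv:1202.5657 — 4 statements merged into one kernel-verified Lean document; each statement's English description precedes it below -/
import Mathlib

section
/- For a > 0, ω > 0 and 0 < q < 1, the principal argument of the phase-shaper frequency response is strictly negative and bounded below: −qπ/2 < arg H(ω) < 0. In particular, inserting the phase shaper into a loop always decreases the phase at any frequency by an amount less than qπ/2. -/
/-!
Dividing numerator and denominator by `ω ^ q` and dropping that positive real factor,
`arg H(ω) = arg (e^{-iθ} + r)` with `θ = qπ/2 ∈ (0, π)` and `r = a ω ^ q > 0`.
The point `w = e^{-iθ} + r` lies in the open lower half-plane, so `arg w < 0`; rotating it by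
`e^{iθ}` gives `1 + r e^{iθ}`, which lies in the open upper half-plane, so `arg w + θ > 0`.
-/

open Real Complex

namespace Complex

lemma arg_pos_of_im_pos {z : ℂ} (hz : 0 < z.im) : 0 < arg z :=
  (arg_nonneg_iff.2 hz.le).lt_of_ne fun h => hz.ne' (arg_eq_zero_iff.1 h.symm).2

theorem arg_inv_exp_mul_I_add_ofReal_mem_Ioo {θ r : ℝ} (hθ : θ ∈ Set.Ioo 0 π) (hr : 0 < r) :
    arg ((exp (θ * I))⁻¹ + r) ∈ Set.Ioo (-θ) 0 := by
  obtain ⟨hθ0, hθπ⟩ := hθ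
  have hsin : 0 < Real.sin θ := sin_pos_of_pos_of_lt_pi hθ0 hθπ
  set u := exp (θ * I) with hu
  set w := u⁻¹ + r
  have hu_ne : u ≠ 0 := exp_ne_zero _
  have hu_arg : arg u = θ := by
    rw [hu, exp_mul_I, arg_cos_add_sin_mul_I ⟨by linarith [pi_pos], hθπ.le⟩]
  have hw_im : w.im = -Real.sin θ := by
    have hu_inv : u⁻¹ = exp (↑(-θ) * I) := by rw [hu, ← exp_neg, ofReal_neg, neg_mul]
    rw [add_im, hu_inv, exp_ofReal_mul_I_im, ofReal_im, add_zero, Real.sin_neg]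
  have hwu : w * u = 1 + r * u := by
    rw [add_mul, inv_mul_cancel₀ hu_ne]
  have hwu_im : (w * u).im = r * Real.sin θ := by
    rw [hwu]
    simp [hu, exp_ofReal_mul_I_im]
  have hw_arg_neg : arg w < 0 := arg_neg_iff.2 (by linarith)
  have hw_ne : w ≠ 0 := fun h => by simp [h] at hw_im; linarith
  have hrot : arg (w * u) = arg w + θ := by
    rw [← hu_arg]
    exact arg_mul hw_ne hu_ne ⟨by linarith [neg_pi_lt_arg w], by linarith⟩
  have hrot_pos : 0 < arg (w * u) := arg_pos_of_im_pos (by rw [hwu_im]; positivity)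
  exact ⟨by linarith, hw_arg_neg⟩

end Complex

lemma one_add_mul_div_mul {K : Type*} [Field K] {w u : K} (hw : w ≠ 0) (hu : u ≠ 0) (r : K) :
    (1 + r * u) / (w * u) = w⁻¹ * (u⁻¹ + r) := by
  field_simp

theorem shaper_arg_bounds (a ω q : ℝ) (ha : 0 < a) (hω : 0 < ω)
    (hq : 0 < q) (hq1 : q < 1) :
    -(q * Real.pi / 2) <
      Complex.arg
        (((1 : ℂ) + ((a * ω ^ q : ℝ) : ℂ) * Complex.exp (Complex.I * (q * Real.pi / 2))) /
          (((ω ^ q : ℝ) : ℂ) * Complex.exp (Complex.I * (q * Real.pi / 2)))) ∧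
    Complex.arg
        (((1 : ℂ) + ((a * ω ^ q : ℝ) : ℂ) * Complex.exp (Complex.I * (q * Real.pi / 2))) /
          (((ω ^ q : ℝ) : ℂ) * Complex.exp (Complex.I * (q * Real.pi / 2)))) < 0 := by
  have hθ : q * π / 2 ∈ Set.Ioo 0 π := ⟨by positivity, by nlinarith [pi_pos]⟩
  have hw : 0 < ω ^ q := rpow_pos_of_pos hω q
  have hexp : I * (q * π / 2 : ℂ) = ((q * π / 2 : ℝ) : ℂ) * I := by push_cast; ring
  rw [hexp, one_add_mul_div_mul (ofReal_ne_zero.2 hw.ne') (exp_ne_zero _), ← ofReal_inv,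
    arg_real_mul _ (inv_pos.2 hw)]
  exact arg_inv_exp_mul_I_add_ofReal_mem_Ioo hθ (mul_pos ha hw)
end

section
/- For a > 0 and 0 < q < 1, the phase function φ(ω) = arctan( a ω^q sin(qπ/2) / (1 + a ω^q cos(qπ/2)) ) − qπ/2 is strictly increasing on (0, ∞). -/
open Real

theorem shaper_phase_strictMono (a q : ℝ) (ha : 0 < a) (hq : 0 < q) (hq1 : q < 1) :
    StrictMonoOn
      (fun ω : ℝ =>
        Real.arctan (a * ω ^ q * Real.sin (q * Real.pi / 2) /
          (1 + a * ω ^ q * Real.cos (q * Real.pi / 2))) - q * Real.pi / 2)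
      (Set.Ioi (0 : ℝ)) := by
  have hpi := Real.pi_pos
  have hs : 0 < Real.sin (q * Real.pi / 2) :=
    Real.sin_pos_of_pos_of_lt_pi (by positivity) (by nlinarith)
  have hc : 0 < Real.cos (q * Real.pi / 2) :=
    Real.cos_pos_of_mem_Ioo ⟨by nlinarith, by nlinarith⟩
  intro ω1 h1 ω2 h2 h12
  simp only [Set.mem_Ioi] at h1 h2
  have hx : a * ω1 ^ q < a * ω2 ^ q :=
    mul_lt_mul_of_pos_left (Real.rpow_lt_rpow h1.le h12 hq) ha
  have hx1 : 0 < a * ω1 ^ q := by positivity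
  have hx2 : 0 < a * ω2 ^ q := by positivity
  have hd1 : 0 < 1 + a * ω1 ^ q * Real.cos (q * Real.pi / 2) := by positivity
  have hd2 : 0 < 1 + a * ω2 ^ q * Real.cos (q * Real.pi / 2) := by positivity
  have hfrac : a * ω1 ^ q * Real.sin (q * Real.pi / 2) /
      (1 + a * ω1 ^ q * Real.cos (q * Real.pi / 2)) <
      a * ω2 ^ q * Real.sin (q * Real.pi / 2) /
      (1 + a * ω2 ^ q * Real.cos (q * Real.pi / 2)) := by
    rw [div_lt_div_iff₀ hd1 hd2]
    nlinarith
  exact sub_lt_sub_right (Real.arctan_strictMono hfrac) _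
end

section
/- For a > 0, ω > 0 and 0 < q < 1, if the paper's design constraint a ω^q ≥ 1 (equation (22), 1/a ≤ ω^q) holds, then the phase of the phase shaper satisfies φ(ω) = arctan( a ω^q sin(qπ/2) / (1 + a ω^q cos(qπ/2)) ) − qπ/2 ≥ −qπ/4; i.e. the phase-margin reduction caused by the shaper at such a frequency is at most qπ/4. -/
open Real

theorem shaper_phase_lag_bound (a ω q : ℝ) (ha : 0 < a) (hω : 0 < ω)
    (hq : 0 < q) (hq1 : q < 1) (hconstraint : 1 ≤ a * ω ^ q) :
    Real.arctan (a * ω ^ q * Real.sin (q * Real.pi / 2) /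
        (1 + a * ω ^ q * Real.cos (q * Real.pi / 2))) - q * Real.pi / 2
      ≥ -(q * Real.pi / 4) := by
  set x := a * ω ^ q with hx
  have hπ := Real.pi_pos
  have hθ1 : 0 < q * Real.pi / 2 := by positivity
  have hθ2 : q * Real.pi / 2 < Real.pi / 2 := by nlinarith
  have hhalf1 : 0 < q * Real.pi / 4 := by positivity
  have hhalf2 : q * Real.pi / 4 < Real.pi / 2 := by nlinarith
  have hcosθ : 0 < Real.cos (q * Real.pi / 2) :=
    Real.cos_pos_of_mem_Ioo ⟨by linarith, hθ2⟩
  have hcosh : 0 < Real.cos (q * Real.pi / 4) :=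
    Real.cos_pos_of_mem_Ioo ⟨by linarith, hhalf2⟩
  have hsinh : 0 < Real.sin (q * Real.pi / 4) :=
    Real.sin_pos_of_pos_of_lt_pi hhalf1 (by linarith)
  have hden : 0 < 1 + x * Real.cos (q * Real.pi / 2) := by nlinarith
  -- double angle identities
  have hdub : q * Real.pi / 2 = 2 * (q * Real.pi / 4) := by ring
  have hsin2 : Real.sin (q * Real.pi / 2)
      = 2 * Real.sin (q * Real.pi / 4) * Real.cos (q * Real.pi / 4) := by
    rw [hdub, Real.sin_two_mul]
  have hcos2 : Real.cos (q * Real.pi / 2)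
      = 2 * Real.cos (q * Real.pi / 4) ^ 2 - 1 := by
    rw [hdub, Real.cos_two_mul]
  -- key inequality: tan(qπ/4) ≤ x sinθ/(1+x cosθ)
  have hkey : Real.tan (q * Real.pi / 4) ≤
      x * Real.sin (q * Real.pi / 2) / (1 + x * Real.cos (q * Real.pi / 2)) := by
    rw [Real.tan_eq_sin_div_cos, div_le_div_iff₀ hcosh hden]
    rw [hsin2, hcos2]
    nlinarith [hsinh, hcosh, hconstraint]
  have harctan := Real.arctan_strictMono.monotone hkey
  rw [Real.arctan_tan (by linarith) hhalf2] at harctan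
  linarith
end

section
/- For a > 0 and 0 < q ≤ 1, the modulus of the phase-shaper frequency response, |H(ω)| = sqrt(1 + 2 a ω^q cos(qπ/2) + a² ω^{2q}) / ω^q, is strictly decreasing on (0, ∞). -/
open Real

theorem shaper_abs_strictAnti (a q : ℝ) (ha : 0 < a) (hq : 0 < q) (hq1 : q ≤ 1) :
    StrictAntiOn
      (fun ω : ℝ =>
        Real.sqrt (1 + 2 * a * ω ^ q * Real.cos (q * Real.pi / 2) + a ^ 2 * ω ^ (2 * q)) / ω ^ q)
      (Set.Ioi (0 : ℝ)) := by
  intro u hu v hv huv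
  simp only [Set.mem_Ioi] at hu hv
  have hpi := Real.pi_pos
  have hc : 0 ≤ Real.cos (q * Real.pi / 2) := by
    apply Real.cos_nonneg_of_mem_Icc
    constructor
    · nlinarith
    · nlinarith
  set c := Real.cos (q * Real.pi / 2) with hcdef
  have hx : 0 < u ^ q := Real.rpow_pos_of_pos hu q
  have hy : 0 < v ^ q := Real.rpow_pos_of_pos hv q
  have hxy : u ^ q < v ^ q := Real.rpow_lt_rpow hu.le huv hq
  have h2u : u ^ (2 * q) = (u ^ q) ^ 2 := by
    rw [mul_comm, Real.rpow_mul hu.le, Real.rpow_two]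
  have h2v : v ^ (2 * q) = (v ^ q) ^ 2 := by
    rw [mul_comm, Real.rpow_mul hv.le, Real.rpow_two]
  simp only [h2u, h2v]
  set x := u ^ q
  set y := v ^ q
  have hAx : 0 ≤ 1 + 2 * a * x * c + a ^ 2 * x ^ 2 := by
    nlinarith [mul_nonneg (mul_nonneg (by positivity : (0:ℝ) ≤ 2 * a) hx.le) hc]
  have hAy : 0 ≤ 1 + 2 * a * y * c + a ^ 2 * y ^ 2 := by
    nlinarith [mul_nonneg (mul_nonneg (by positivity : (0:ℝ) ≤ 2 * a) hy.le) hc]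
  rw [div_lt_div_iff₀ hy hx]
  have hrhs : 0 ≤ Real.sqrt (1 + 2 * a * x * c + a ^ 2 * x ^ 2) * y := by positivity
  refine lt_of_pow_lt_pow_left₀ 2 hrhs ?_
  rw [mul_pow, mul_pow, Real.sq_sqrt hAy, Real.sq_sqrt hAx]
  nlinarith [mul_pos hx hy, mul_nonneg (mul_nonneg (mul_nonneg ha.le hc) hx.le) hy.le,
    sq_nonneg (y - x), mul_pos (mul_pos hx hy) (sub_pos.mpr hxy)]
end
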